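/- Let A be a noetherian ring, complete with respect to an ideal I, and let S be a profinite set. If M → N → P is an exact sequence of finitely generated A-modules, then the induced sequence C(S,M) → C(S,N) → C(S,P) of continuous-function modules is exact, where each finitely generated A-module carries its I-adic topology. -/

import Mathlib

/-!
Modulo `I ^ n`, a continuous map into an `I`-adically topologized module is locally constant, so a
map `g : S → N` with values in the range of `α` lifts modulo `I ^ n N` to a locally constant map,
by choosing preimages in the discrete quotient. Artin–Rees gives `k` such that when `g ≡ α u`
modulo `I ^ (n + k) N`, the next correction can be taken in `I ^ n M`. The successive lifts are
then `I`-adically Cauchy; the limit is continuous since modulo each `I ^ n M` it agrees with a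
locally constant map, and it lifts `g` because `N` is `I`-adically Hausdorff (Krull).
-/

open Filter Topology

section Algebra

variable {A : Type*} [CommRing A] (I : Ideal A)

theorem isPrecomplete_of_finite [IsPrecomplete I A] (M : Type*) [AddCommGroup M] [Module A M]
    [Module.Finite A M] : IsPrecomplete I M := by
  -- `AdicCompletion I A ⊗ M` maps onto `AdicCompletion I M`, and `AdicCompletion I A` is just `A`.
  refine AdicCompletion.of_surjective_iff.mp fun x => ?_
  obtain ⟨t, rfl⟩ := AdicCompletion.ofTensorProduct_surjective_of_finite I M x
  induction t using TensorProduct.induction_on with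
  | zero => exact ⟨0, by simp⟩
  | tmul r m =>
    obtain ⟨a, rfl⟩ := AdicCompletion.of_surjective I A r
    exact ⟨a • m, by
      rw [AdicCompletion.ofTensorProduct_tmul, map_smul]
      exact (algebraMap_smul (AdicCompletion I A) a _).symm⟩
  | add x y hx hy =>
    obtain ⟨a, ha⟩ := hx
    obtain ⟨b, hb⟩ := hy
    exact ⟨a + b, by simp [ha, hb]⟩

theorem Ideal.exists_pow_add_smul_top_inf_range_le_map [IsNoetherianRing A]
    {M N : Type*} [AddCommGroup M] [Module A M] [AddCommGroup N] [Module A N] [Module.Finite A N]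
    (f : M →ₗ[A] N) :
    ∃ k, ∀ n, I ^ (n + k) • ⊤ ⊓ LinearMap.range f ≤ (I ^ n • ⊤ : Submodule A M).map f := by
  obtain ⟨k, hk⟩ := I.exists_pow_inf_eq_pow_smul (LinearMap.range f)
  refine ⟨k, fun n => ?_⟩
  calc I ^ (n + k) • ⊤ ⊓ LinearMap.range f = I ^ n • (I ^ k • ⊤ ⊓ LinearMap.range f) := by
        rw [hk _ (Nat.le_add_left k n), Nat.add_sub_cancel]
    _ ≤ I ^ n • LinearMap.range f := Submodule.smul_mono le_rfl inf_le_right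
    _ = (I ^ n • ⊤ : Submodule A M).map f := by rw [Submodule.map_smul'', Submodule.map_top]

theorem smodEq_of_smodEq_succ {M : Type*} [AddCommGroup M] [Module A M] {f : ℕ → M}
    (hf : ∀ n, f n ≡ f (n + 1) [SMOD (I ^ n • ⊤ : Submodule A M)]) {m n : ℕ} (hmn : m ≤ n) :
    f m ≡ f n [SMOD (I ^ m • ⊤ : Submodule A M)] := by
  induction n, hmn using Nat.le_induction with
  | base => rfl
  | succ n hmn ih =>
    exact ih.trans ((hf n).mono (Submodule.smul_mono_left (Ideal.pow_le_pow_right hmn)))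

end Algebra

theorem IsLocallyConstant.exists_isLocallyConstant_rel {S Q X : Type*} [TopologicalSpace S]
    [Nonempty X] {h : S → Q} (hh : IsLocallyConstant h) {R : Q → X → Prop}
    (H : ∀ s, ∃ x, R (h s) x) : ∃ v : S → X, IsLocallyConstant v ∧ ∀ s, R (h s) (v s) :=
  ⟨fun s => Classical.epsilon (R (h s)), hh.comp fun q => Classical.epsilon (R q),
    fun s => Classical.epsilon_spec (H s)⟩

section AdicTopology

variable {A : Type*} [CommRing A] (I : Ideal A) {S : Type*} [TopologicalSpace S]
  {M N : Type*} [AddCommGroup M] [Module A M] [AddCommGroup N] [Module A N]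

theorem continuous_iff_forall_isLocallyConstant_mk
    [TopologicalSpace M] [IsTopologicalAddGroup M]
    (hM : ∀ t : Set M, t ∈ 𝓝 (0 : M) ↔ ∃ n : ℕ, ((I ^ n • ⊤ : Submodule A M) : Set M) ⊆ t)
    {f : S → M} :
    Continuous f ↔ ∀ n : ℕ, IsLocallyConstant fun s =>
      Submodule.Quotient.mk (p := (I ^ n • ⊤ : Submodule A M)) (f s) := by
  constructor
  · intro hf n
    have hopen : IsOpen ((I ^ n • ⊤ : Submodule A M) : Set M) :=
      (I ^ n • ⊤ : Submodule A M).toAddSubgroup.isOpen_of_mem_nhds ((hM _).mpr ⟨n, subset_rfl⟩)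
    refine (IsLocallyConstant.iff_isOpen_fiber.mpr fun q => ?_).comp_continuous hf
    obtain ⟨x, rfl⟩ := Submodule.Quotient.mk_surjective _ q
    convert hopen.preimage (continuous_sub_right x) using 1
    ext y
    exact Submodule.Quotient.eq _
  · intro hf
    refine continuous_iff_continuousAt.mpr fun s₀ t ht => ?_
    have ht₀ : (f s₀ + ·) ⁻¹' t ∈ 𝓝 (0 : M) :=
      (continuous_const_add (f s₀)).continuousAt.preimage_mem_nhds (by simpa using ht)
    obtain ⟨n, hn⟩ := (hM _).mp ht₀
    refine mem_map.mpr <| mem_of_superset (((hf n).isOpen_fiber _).mem_nhds rfl) fun s hs => ?_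
    have hmem : f s - f s₀ ∈ (I ^ n • ⊤ : Submodule A M) := (Submodule.Quotient.eq _).mp hs
    simpa using hn hmem

theorem exists_isLocallyConstant_lift_modulo [TopologicalSpace N] [IsTopologicalAddGroup N]
    (hN : ∀ t : Set N, t ∈ 𝓝 (0 : N) ↔ ∃ n : ℕ, ((I ^ n • ⊤ : Submodule A N) : Set N) ⊆ t)
    (α : M →ₗ[A] N) {d : S → N} (hd : Continuous d) {L : Submodule A M}
    (hdL : ∀ s, d s ∈ L.map α) (p : ℕ) :
    ∃ v : S → M, IsLocallyConstant v ∧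
      ∀ s, v s ∈ L ∧ d s ≡ α (v s) [SMOD (I ^ p • ⊤ : Submodule A N)] := by
  obtain ⟨v, hv, hvL⟩ := ((continuous_iff_forall_isLocallyConstant_mk I hN).mp hd p
    ).exists_isLocallyConstant_rel (R := fun q x => x ∈ L ∧ Submodule.Quotient.mk (α x) = q)
    fun s => by
      obtain ⟨x, hx, hxd⟩ := hdL s
      exact ⟨x, hx, by rw [hxd]⟩
  exact ⟨v, hv, fun s => ⟨(hvL s).1, (hvL s).2.symm⟩⟩

theorem exists_continuousMap_smodEq_of_smodEq_succ [IsPrecomplete I M]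
    [TopologicalSpace M] [IsTopologicalAddGroup M]
    (hM : ∀ t : Set M, t ∈ 𝓝 (0 : M) ↔ ∃ n : ℕ, ((I ^ n • ⊤ : Submodule A M) : Set M) ⊆ t)
    {u : ℕ → S → M} (hu : ∀ n, IsLocallyConstant (u n))
    (hcauchy : ∀ n s, u n s ≡ u (n + 1) s [SMOD (I ^ n • ⊤ : Submodule A M)]) :
    ∃ f : C(S, M), ∀ n s, u n s ≡ f s [SMOD (I ^ n • ⊤ : Submodule A M)] := by
  choose f hf using fun s =>
    IsPrecomplete.prec ‹_› (smodEq_of_smodEq_succ I fun n => hcauchy n s)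
  refine ⟨⟨f, (continuous_iff_forall_isLocallyConstant_mk I hM).mpr fun n => ?_⟩, fun n s => hf s n⟩
  have hmk : (fun s => Submodule.Quotient.mk (p := (I ^ n • ⊤ : Submodule A M)) (f s)) =
      fun s => Submodule.Quotient.mk (u n s) := funext fun s => (hf s n).symm
  rw [hmk]
  exact (hu n).comp _

theorem exists_continuousMap_lift [IsNoetherianRing A] [Module.Finite A N] [IsPrecomplete I M]
    [IsHausdorff I N] [TopologicalSpace M] [IsTopologicalAddGroup M]
    [TopologicalSpace N] [IsTopologicalAddGroup N]
    (hM : ∀ t : Set M, t ∈ 𝓝 (0 : M) ↔ ∃ n : ℕ, ((I ^ n • ⊤ : Submodule A M) : Set M) ⊆ t)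
    (hN : ∀ t : Set N, t ∈ 𝓝 (0 : N) ↔ ∃ n : ℕ, ((I ^ n • ⊤ : Submodule A N) : Set N) ⊆ t)
    (α : M →ₗ[A] N) (g : C(S, N)) (hg : ∀ s, g s ∈ LinearMap.range α) :
    ∃ f : C(S, M), ∀ s, α (f s) = g s := by
  obtain ⟨k, hk⟩ := I.exists_pow_add_smul_top_inf_range_le_map α
  let IsApprox (n : ℕ) (u : S → M) : Prop :=
    IsLocallyConstant u ∧ ∀ s, g s ≡ α (u s) [SMOD (I ^ (n + k) • ⊤ : Submodule A N)]
  have base : ∃ u, IsApprox 0 u := by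
    obtain ⟨u, hu, hgu⟩ := exists_isLocallyConstant_lift_modulo I hN α g.continuous (L := ⊤)
      (by simpa [← LinearMap.range_eq_map] using hg) (0 + k)
    exact ⟨u, hu, fun s => (hgu s).2⟩
  have step : ∀ n u, IsApprox n u →
      ∃ w, IsApprox (n + 1) w ∧ ∀ s, u s ≡ w s [SMOD (I ^ n • ⊤ : Submodule A M)] := by
    rintro n u ⟨hu, hgu⟩
    have hd : ∀ s, g s - α (u s) ∈ (I ^ n • ⊤ : Submodule A M).map α := fun s =>
      hk n ⟨SModEq.sub_mem.mp (hgu s), sub_mem (hg s) (LinearMap.mem_range_self α _)⟩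
    obtain ⟨v, hv, hvL⟩ := exists_isLocallyConstant_lift_modulo I hN α
      (g.continuous.sub (hu.comp α).continuous) hd (n + 1 + k)
    refine ⟨u + v, ⟨hu.add hv, fun s => ?_⟩, fun s => ?_⟩
    · rw [SModEq.sub_mem, Pi.add_apply, map_add, ← sub_sub]
      exact SModEq.sub_mem.mp (hvL s).2
    · rw [SModEq.sub_mem, Pi.add_apply, sub_add_cancel_left, neg_mem_iff]
      exact (hvL s).1
  obtain ⟨u₀, hu₀⟩ := base
  choose! next hnext using step
  let u (n : ℕ) : S → M := Nat.rec u₀ next n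
  have hu (n : ℕ) : IsApprox n (u n) := Nat.rec hu₀ (fun n ih => (hnext n _ ih).1) n
  obtain ⟨f, hf⟩ := exists_continuousMap_smodEq_of_smodEq_succ I hM (fun n => (hu n).1)
    fun n => (hnext n _ (hu n)).2
  refine ⟨f, fun s => (IsHausdorff.eq_iff_smodEq (I := I)).mpr fun n => ?_⟩
  have hαmap : (I ^ n • ⊤ : Submodule A M).map α ≤ I ^ n • ⊤ := by
    rw [Submodule.map_smul'']
    exact Submodule.smul_mono le_rfl le_top
  calc α (f s) ≡ α (u n s) [SMOD (I ^ n • ⊤ : Submodule A N)] := ((hf n s).symm.map α).mono hαmap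
    _ ≡ g s [SMOD (I ^ n • ⊤ : Submodule A N)] :=
      ((hu n).2 s).symm.mono (Submodule.smul_mono_left (Ideal.pow_le_pow_right (n.le_add_right k)))

end AdicTopology

theorem continuousMap_sequence_exact
    (A : Type*) [CommRing A] [IsNoetherianRing A] (I : Ideal A) [IsAdicComplete I A]
    (S : Type*) [TopologicalSpace S]
    (M N P : Type*)
    [AddCommGroup M] [Module A M] [Module.Finite A M]
    [AddCommGroup N] [Module A N] [Module.Finite A N]
    [AddCommGroup P] [Module A P]
    [TopologicalSpace M] [IsTopologicalAddGroup M]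
    [TopologicalSpace N] [IsTopologicalAddGroup N]
    (hM : ∀ t : Set M, t ∈ nhds (0 : M) ↔ ∃ n : ℕ, ((I ^ n • ⊤ : Submodule A M) : Set M) ⊆ t)
    (hN : ∀ t : Set N, t ∈ nhds (0 : N) ↔ ∃ n : ℕ, ((I ^ n • ⊤ : Submodule A N) : Set N) ⊆ t)
    (α : M →ₗ[A] N) (β : N →ₗ[A] P) (hexact : Function.Exact α β) :
    ∀ g : C(S, N), (∀ s, β (g s) = 0) ↔ ∃ f : C(S, M), ∀ s, α (f s) = g s := by
  have : IsPrecomplete I M := isPrecomplete_of_finite I M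
  have : IsHausdorff I N := .of_le_jacobson I N (IsAdicComplete.le_jacobson_bot I)
  intro g
  constructor
  · exact fun hg => exists_continuousMap_lift I hM hN α g fun s => (hexact (g s)).mp (hg s)
  · rintro ⟨f, hf⟩ s
    rw [← hf s]
    exact hexact.apply_apply_eq_zero (f s)
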